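/- Fix $\beta_0>\delta>0$ and a sequence $a_N\to\infty$ with $\liminf_{N\to\infty}\frac{1}{a_N}F_N'(\beta_0-\delta)>0$, where $F_N$ is the log-partition function of the Ising model. Then $\lim_{\varepsilon\to 0}\limsup_{N\to\infty}\frac{1}{a_N}\log\mathbb{P}_{\beta_0}(H_N(\sigma)<\varepsilon a_N)<0$; in particular $\lim_{\varepsilon\to 0}\limsup_{N\to\infty}\mathbb{P}_{\beta_0}(H_N(\sigma)<\varepsilon a_N)=0$. -/

import Mathlib

/-!
Under `P_β` the tilted expectation `E_β e^{-δH/2}` equals `Z(β-δ)/Z(β)`, so Markov's inequality gives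
`P_β(H < t) ≤ e^{δt/2} Z(β-δ)/Z(β)`. Jensen's inequality for `e^{δH/2}` under `P_{β-δ}` is the tangent
line bound `log Z(β) - log Z(β-δ) ≥ δ F'(β-δ)` of the convex log-partition function. With
`F_N'(β₀-δ) ≥ c a_N` and `ε ≤ c`, the probability is at most `e^{-δ c a_N / 2}`, which tends to `0`.
-/

open Real Finset Filter

noncomputable def logPart {N : ℕ} (H : (Fin N → Bool) → ℝ) (β : ℝ) : ℝ :=
  Real.log ((2 : ℝ)⁻¹ ^ N * ∑ τ : Fin N → Bool, Real.exp (β / 2 * H τ))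

open Classical in
/-- `P_β(H(σ) < t)` for the model `P_β(σ=τ) ∝ e^{β H(τ)/2}` on `{-1,1}^N`. -/
noncomputable def probLT {N : ℕ} (H : (Fin N → Bool) → ℝ) (β t : ℝ) : ℝ :=
  (∑ τ ∈ Finset.univ.filter (fun τ : Fin N → Bool => H τ < t), Real.exp (β / 2 * H τ)) /
    ∑ τ : Fin N → Bool, Real.exp (β / 2 * H τ)

section Gibbs

variable {ι : Type*} [Fintype ι] (H : ι → ℝ)

noncomputable def partitionFn (β : ℝ) : ℝ :=
  ∑ τ, exp (β / 2 * H τ)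

noncomputable def gibbsMean (β : ℝ) : ℝ :=
  (∑ τ, H τ * exp (β / 2 * H τ)) / partitionFn H β

theorem partitionFn_pos [Nonempty ι] (β : ℝ) : 0 < partitionFn H β :=
  Finset.sum_pos (fun _ _ => exp_pos _) univ_nonempty

theorem hasDerivAt_partitionFn (β : ℝ) :
    HasDerivAt (partitionFn H) (∑ τ, H τ * exp (β / 2 * H τ) / 2) β := by
  refine HasDerivAt.fun_sum fun τ _ => ?_
  have hexponent : HasDerivAt (fun b : ℝ => b / 2 * H τ) (1 / 2 * H τ) β :=
    ((hasDerivAt_id' β).div_const 2).mul_const (H τ)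
  have h := hexponent.exp
  rwa [show exp (β / 2 * H τ) * (1 / 2 * H τ) = H τ * exp (β / 2 * H τ) / 2 by ring] at h

theorem partitionFn_mul_exp_gibbsMean_le [Nonempty ι] (β δ : ℝ) :
    partitionFn H β * exp (δ / 2 * gibbsMean H β) ≤ partitionFn H (β + δ) := by
  set Z := partitionFn H β
  have hZ : 0 < Z := partitionFn_pos H β
  have hw : ∀ τ ∈ (univ : Finset ι), 0 ≤ exp (β / 2 * H τ) / Z := fun τ _ => by positivity
  have hw1 : ∑ τ, exp (β / 2 * H τ) / Z = 1 := by rw [← Finset.sum_div]; exact div_self hZ.ne'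
  have jensen := convexOn_exp.map_sum_le hw hw1 (p := fun τ => δ / 2 * H τ)
    fun _ _ => Set.mem_univ _
  have hmean : ∑ τ, (exp (β / 2 * H τ) / Z) • (δ / 2 * H τ) = δ / 2 * gibbsMean H β := by
    simp only [gibbsMean, smul_eq_mul, Finset.sum_div, Finset.mul_sum]
    exact Finset.sum_congr rfl fun τ _ => by ring
  have htilt : ∑ τ, (exp (β / 2 * H τ) / Z) • exp (δ / 2 * H τ) = partitionFn H (β + δ) / Z := by
    simp only [partitionFn, smul_eq_mul, Finset.sum_div]
    refine Finset.sum_congr rfl fun τ _ => ?_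
    rw [div_mul_eq_mul_div, ← exp_add]
    ring_nf
  rw [hmean, htilt, le_div_iff₀ hZ] at jensen
  linarith

open Classical in
theorem sum_filter_lt_exp_le (β t : ℝ) {δ : ℝ} (hδ : 0 ≤ δ) :
    ∑ τ ∈ univ.filter (fun τ => H τ < t), exp (β / 2 * H τ) ≤
      exp (δ * t / 2) * partitionFn H (β - δ) := by
  rw [partitionFn, Finset.mul_sum]
  calc ∑ τ ∈ univ.filter (fun τ => H τ < t), exp (β / 2 * H τ)
      ≤ ∑ τ ∈ univ.filter (fun τ => H τ < t), exp (δ * t / 2) * exp ((β - δ) / 2 * H τ) := by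
        refine Finset.sum_le_sum fun τ hτ => ?_
        have ht : H τ < t := (Finset.mem_filter.mp hτ).2
        rw [← exp_add, exp_le_exp]
        nlinarith
    _ ≤ ∑ τ, exp (δ * t / 2) * exp ((β - δ) / 2 * H τ) :=
        Finset.sum_le_sum_of_subset_of_nonneg (Finset.filter_subset _ _)
          fun τ _ _ => by positivity

end Gibbs

theorem deriv_logPart {N : ℕ} (H : (Fin N → Bool) → ℝ) (β : ℝ) :
    deriv (logPart H) β = gibbsMean H β / 2 := by
  have hderiv : HasDerivAt (logPart H)
      (((2 : ℝ)⁻¹ ^ N * ∑ τ, H τ * exp (β / 2 * H τ) / 2) / ((2 : ℝ)⁻¹ ^ N * partitionFn H β))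
      β :=
    ((hasDerivAt_partitionFn H β).const_mul _).log (by positivity [partitionFn_pos H β])
  rw [hderiv.deriv, mul_div_mul_left _ _ (by positivity), gibbsMean, ← Finset.sum_div, div_right_comm]

theorem probLT_le_exp {N : ℕ} (H : (Fin N → Bool) → ℝ) (β t : ℝ) {δ : ℝ} (hδ : 0 ≤ δ) :
    probLT H β t ≤ exp (δ * t / 2 - δ * deriv (logPart H) (β - δ)) := by
  have hjensen := partitionFn_mul_exp_gibbsMean_le H (β - δ) δ
  rw [sub_add_cancel] at hjensen
  change _ / partitionFn H β ≤ _
  rw [div_le_iff₀ (partitionFn_pos H β), deriv_logPart, exp_sub]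
  calc _ ≤ exp (δ * t / 2) * partitionFn H (β - δ) := sum_filter_lt_exp_le H β t hδ
    _ = exp (δ * t / 2) / exp (δ * (gibbsMean H (β - δ) / 2)) *
          (partitionFn H (β - δ) * exp (δ / 2 * gibbsMean H (β - δ))) := by
        field_simp
    _ ≤ _ := by gcongr

theorem stmt19_general (H : (n : ℕ) → (Fin n → Bool) → ℝ) (a : ℕ → ℝ) (ha : ∀ n, 0 < a n)
    (haTop : Tendsto a atTop atTop)
    (β₀ δ : ℝ) (hδ : 0 < δ)
    (hliminf : ∃ c : ℝ, 0 < c ∧ ∀ᶠ n in atTop, c * a n ≤ deriv (logPart (H n)) (β₀ - δ)) :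
    (∃ c : ℝ, c < 0 ∧ ∃ ε₀ : ℝ, 0 < ε₀ ∧ ∀ ε ∈ Set.Ioc (0 : ℝ) ε₀,
      ∀ᶠ n in atTop, probLT (H n) β₀ (ε * a n) ≤ Real.exp (c * a n)) ∧
    (∀ η : ℝ, 0 < η → ∃ ε₀ : ℝ, 0 < ε₀ ∧ ∀ ε ∈ Set.Ioc (0 : ℝ) ε₀,
      ∀ᶠ n in atTop, probLT (H n) β₀ (ε * a n) ≤ η) := by
  obtain ⟨c, hc, hderiv⟩ := hliminf
  have hrate : -(δ * c / 2) < 0 := by nlinarith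
  have hbound : ∀ ε ∈ Set.Ioc (0 : ℝ) c,
      ∀ᶠ n in atTop, probLT (H n) β₀ (ε * a n) ≤ exp (-(δ * c / 2) * a n) := by
    intro ε hε
    filter_upwards [hderiv] with n hn
    refine (probLT_le_exp (H n) β₀ (ε * a n) hδ.le).trans (exp_le_exp.mpr ?_)
    nlinarith [mul_le_mul_of_nonneg_right hε.2 (ha n).le]
  have hdecay : Tendsto (fun n => exp (-(δ * c / 2) * a n)) atTop (nhds 0) :=
    tendsto_exp_atBot.comp (haTop.const_mul_atTop_of_neg hrate)
  refine ⟨⟨_, hrate, c, hc, hbound⟩, fun η hη => ⟨c, hc, fun ε hε => ?_⟩⟩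
  filter_upwards [hbound ε hε, hdecay.eventually (ge_mem_nhds hη)] with n h1 h2 using h1.trans h2

/-- Lower-tail bound: if `liminf F_N'(β₀-δ)/a_N > 0` then
`lim_{ε→0} limsup_N (1/a_N) log P_{β₀}(H_N < ε a_N) < 0` (expressed via exponential
bounds to avoid `log 0`), and in particular
`lim_{ε→0} limsup_N P_{β₀}(H_N < ε a_N) = 0`. -/
theorem stmt19 (H : (n : ℕ) → (Fin n → Bool) → ℝ) (a : ℕ → ℝ) (ha : ∀ n, 0 < a n)
    (haTop : Tendsto a atTop atTop)
    (β₀ δ : ℝ) (hδ : 0 < δ) (hδβ : δ < β₀)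
    (hliminf : ∃ c : ℝ, 0 < c ∧ ∀ᶠ n in atTop, c * a n ≤ deriv (logPart (H n)) (β₀ - δ)) :
    (∃ c : ℝ, c < 0 ∧ ∃ ε₀ : ℝ, 0 < ε₀ ∧ ∀ ε ∈ Set.Ioc (0 : ℝ) ε₀,
      ∀ᶠ n in atTop, probLT (H n) β₀ (ε * a n) ≤ Real.exp (c * a n)) ∧
    (∀ η : ℝ, 0 < η → ∃ ε₀ : ℝ, 0 < ε₀ ∧ ∀ ε ∈ Set.Ioc (0 : ℝ) ε₀,
      ∀ᶠ n in atTop, probLT (H n) β₀ (ε * a n) ≤ η) :=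
  stmt19_general H a ha haTop β₀ δ hδ hliminf
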